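/- For every ε ∈ (0,1] and every integer m ≥ 1, the derivative of b_{m,ε} is O(1/x) as x → ∞: there exist constants C > 0 and x_0 ≥ 1 such that for all x ≥ x_0, b_{m,ε} is differentiable at x and |b_{m,ε}'(x)| ≤ C/x. -/

import Mathlib

/-!
Put `h = Φ_m^{-ε-1} / ∏_{j<m} Φ_j`, so that `(1 / (ε Φ_m^ε))' = -h` and
`b_{m,ε}(x) = -log ∫_x^{x+1} h`, whence `b' = (h(x) - h(x+1)) / ∫_x^{x+1} h`.
Since `h` decreases, the integral is at least `h(x+1)`. Since `log Φ_j = Φ_{j+1} - 1`,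
`log h(x) - log h(x+1)` is a combination, with total weight `ε + 1 + m`, of increments
`Φ_k(x+1) - Φ_k(x) ≤ 1 / ∏_{j<k} Φ_j(x) ≤ 1/x` (`k ≥ 1`); so `h(x)/h(x+1) - 1 = O(1/x)`.
-/

/-- The iterated logarithm functions: `Phi 0 x = x`, `Phi (m+1) x = 1 + log (Phi m x)`,
so that `Phi 1 x = φ(x) = 1 + log x` and `Phi m = φ(Phi (m−1))`. -/
noncomputable def Phi : ℕ → ℝ → ℝ
  | 0, x => x
  | m + 1, x => 1 + Real.log (Phi m x)

/-- The boundary `b_{m,ε}(x) = −log [1/(ε Φ_m(x)^ε) − 1/(ε Φ_m(x+1)^ε)]`. -/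
noncomputable def bfun (m : ℕ) (ε : ℝ) (x : ℝ) : ℝ :=
  -Real.log (1 / (ε * Phi m x ^ ε) - 1 / (ε * Phi m (x + 1) ^ ε))

open Real Set Finset

noncomputable def PhiProd (m : ℕ) (x : ℝ) : ℝ := ∏ j ∈ range m, Phi j x

noncomputable def bDensity (m : ℕ) (ε x : ℝ) : ℝ := Phi m x ^ (-ε - 1) / PhiProd m x

lemma exists_sub_eq_of_hasDerivAt {f f' : ℝ → ℝ} {a : ℝ}
    (hf : ∀ t ∈ Icc a (a + 1), HasDerivAt f (f' t) t) :
    ∃ c ∈ Icc a (a + 1), f (a + 1) - f a = f' c := by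
  obtain ⟨c, hc, hc_eq⟩ := exists_hasDerivAt_eq_slope f f' (lt_add_one a)
    (fun t ht => (hf t ht).continuousAt.continuousWithinAt)
    (fun t ht => hf t (Ioo_subset_Icc_self ht))
  exact ⟨c, Ioo_subset_Icc_self hc, by rw [hc_eq, add_sub_cancel_left, div_one]⟩

lemma exp_sub_one_le_mul_exp (y : ℝ) : exp y - 1 ≤ y * exp y := by
  have h := mul_le_mul_of_nonneg_left (one_sub_le_exp_neg y) (exp_pos y).le
  rw [← exp_add, add_neg_cancel, exp_zero] at h
  linarith

section Phi

variable {m : ℕ} {x y : ℝ}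

lemma one_le_Phi (m : ℕ) (hx : 1 ≤ x) : 1 ≤ Phi m x := by
  induction m with
  | zero => exact hx
  | succ m ih => exact le_add_of_nonneg_right (log_nonneg ih)

lemma Phi_pos (m : ℕ) (hx : 1 ≤ x) : 0 < Phi m x :=
  one_pos.trans_le (one_le_Phi m hx)

lemma Phi_le_Phi (m : ℕ) (hx : 1 ≤ x) (hxy : x ≤ y) : Phi m x ≤ Phi m y := by
  induction m with
  | zero => exact hxy
  | succ m ih => exact add_le_add_right (log_le_log (Phi_pos m hx) ih) 1

lemma PhiProd_succ (m : ℕ) (x : ℝ) : PhiProd (m + 1) x = PhiProd m x * Phi m x :=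
  prod_range_succ _ _

lemma PhiProd_pos (m : ℕ) (hx : 1 ≤ x) : 0 < PhiProd m x :=
  prod_pos fun j _ => Phi_pos j hx

lemma PhiProd_le_PhiProd (m : ℕ) (hx : 1 ≤ x) (hxy : x ≤ y) : PhiProd m x ≤ PhiProd m y :=
  prod_le_prod (fun j _ => (Phi_pos j hx).le) fun j _ => Phi_le_Phi j hx hxy

lemma le_PhiProd (hm : m ≠ 0) (hx : 1 ≤ x) : x ≤ PhiProd m x := by
  obtain ⟨k, rfl⟩ := Nat.exists_eq_succ_of_ne_zero hm
  rw [PhiProd, prod_range_succ']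
  exact le_mul_of_one_le_left (by linarith) (one_le_prod fun j _ => one_le_Phi (j + 1) hx)

lemma hasDerivAt_Phi (m : ℕ) (hx : 1 ≤ x) : HasDerivAt (Phi m) (PhiProd m x)⁻¹ x := by
  induction m with
  | zero => exact (hasDerivAt_id' x).congr_deriv (by simp [PhiProd])
  | succ m ih =>
    refine ((ih.log (Phi_pos m hx).ne').const_add 1).congr_deriv ?_
    rw [PhiProd_succ, mul_inv, div_eq_mul_inv]

lemma Phi_add_one_sub_le (m : ℕ) (hx : 1 ≤ x) :
    Phi m (x + 1) - Phi m x ≤ (PhiProd m x)⁻¹ := by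
  obtain ⟨c, hc, hc_eq⟩ :=
    exists_sub_eq_of_hasDerivAt fun t ht => hasDerivAt_Phi m (hx.trans ht.1)
  rw [hc_eq]
  exact inv_anti₀ (PhiProd_pos m hx) (PhiProd_le_PhiProd m hx hc.1)

lemma Phi_add_one_sub_le_inv (hm : m ≠ 0) (hx : 1 ≤ x) :
    Phi m (x + 1) - Phi m x ≤ x⁻¹ :=
  (Phi_add_one_sub_le m hx).trans (inv_anti₀ (by linarith) (le_PhiProd hm hx))

end Phi

section bDensity

variable {m : ℕ} {ε x y : ℝ}

lemma bDensity_pos (hx : 1 ≤ x) : 0 < bDensity m ε x :=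
  div_pos (rpow_pos_of_pos (Phi_pos m hx) _) (PhiProd_pos m hx)

lemma bDensity_le_bDensity (hε : -1 ≤ ε) (hx : 1 ≤ x) (hxy : x ≤ y) :
    bDensity m ε y ≤ bDensity m ε x :=
  div_le_div₀ (rpow_pos_of_pos (Phi_pos m hx) _).le
    (rpow_le_rpow_of_nonpos (Phi_pos m hx) (Phi_le_Phi m hx hxy) (by linarith))
    (PhiProd_pos m hx) (PhiProd_le_PhiProd m hx hxy)

lemma log_bDensity_sub_log_bDensity (hx : 1 ≤ x) :
    log (bDensity m ε x) - log (bDensity m ε (x + 1)) =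
      (ε + 1) * (Phi (m + 1) (x + 1) - Phi (m + 1) x) +
        ∑ j ∈ range m, (Phi (j + 1) (x + 1) - Phi (j + 1) x) := by
  have hx1 : 1 ≤ x + 1 := by linarith
  rw [bDensity, bDensity, log_div (rpow_pos_of_pos (Phi_pos m hx) _).ne' (PhiProd_pos m hx).ne',
    log_div (rpow_pos_of_pos (Phi_pos m hx1) _).ne' (PhiProd_pos m hx1).ne',
    log_rpow (Phi_pos m hx), log_rpow (Phi_pos m hx1), PhiProd, PhiProd,
    log_prod fun j _ => (Phi_pos j hx).ne', log_prod fun j _ => (Phi_pos j hx1).ne']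
  simp only [Phi, add_sub_add_left_eq_sub, sum_sub_distrib]
  ring

lemma log_bDensity_sub_log_bDensity_le (hε : -1 ≤ ε) (hx : 1 ≤ x) :
    log (bDensity m ε x) - log (bDensity m ε (x + 1)) ≤ (ε + 1 + m) / x := by
  have hinc k : Phi (k + 1) (x + 1) - Phi (k + 1) x ≤ x⁻¹ :=
    Phi_add_one_sub_le_inv k.succ_ne_zero hx
  calc _ ≤ (ε + 1) * x⁻¹ + ∑ _j ∈ range m, x⁻¹ := by
        rw [log_bDensity_sub_log_bDensity hx]
        gcongr with j
        · linarith
        · exact hinc m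
        · exact hinc j
    _ = (ε + 1 + m) / x := by
        rw [sum_const, card_range, nsmul_eq_mul]
        ring

lemma bDensity_sub_div_le (hε : -1 ≤ ε) (hx : 1 ≤ x) :
    (bDensity m ε x - bDensity m ε (x + 1)) / bDensity m ε (x + 1) ≤
      (ε + 1 + m) * exp (ε + 1 + m) / x := by
  have hpos := bDensity_pos (m := m) (ε := ε) hx
  have hpos1 := bDensity_pos (m := m) (ε := ε) (by linarith : 1 ≤ x + 1)
  set D := log (bDensity m ε x) - log (bDensity m ε (x + 1))
  have hD : D ≤ (ε + 1 + m) / x := log_bDensity_sub_log_bDensity_le hε hx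
  have hD₀ : 0 ≤ D :=
    sub_nonneg.2 (log_le_log hpos1 (bDensity_le_bDensity hε hx (by linarith)))
  have hK : 0 ≤ ε + 1 + m := add_nonneg (by linarith) m.cast_nonneg
  have hratio : (bDensity m ε x - bDensity m ε (x + 1)) / bDensity m ε (x + 1) = exp D - 1 := by
    rw [exp_sub, exp_log hpos, exp_log hpos1, sub_div, div_self hpos1.ne']
  calc _ = exp D - 1 := hratio
    _ ≤ D * exp D := exp_sub_one_le_mul_exp D
    _ ≤ (ε + 1 + m) / x * exp (ε + 1 + m) := by
        gcongr
        exact hD.trans (div_le_self hK hx)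
    _ = (ε + 1 + m) * exp (ε + 1 + m) / x := by ring

end bDensity

section bfun

variable {m : ℕ} {ε x : ℝ}

lemma hasDerivAt_one_div_mul_Phi_rpow (hε : ε ≠ 0) (hx : 1 ≤ x) :
    HasDerivAt (fun y => 1 / (ε * Phi m y ^ ε)) (-bDensity m ε x) x := by
  have hΦ := Phi_pos m hx
  have h := (((hasDerivAt_Phi m hx).rpow_const (p := ε) (Or.inl hΦ.ne')).const_mul ε).fun_inv
    (mul_ne_zero hε (rpow_pos_of_pos hΦ ε).ne')
  simp only [one_div]
  refine h.congr_deriv ?_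
  rw [bDensity, show ε - 1 = (-ε - 1) + ε + ε by ring, rpow_add hΦ, rpow_add hΦ]
  field_simp

lemma bDensity_le_sub (hε : 0 < ε) (hx : 1 ≤ x) :
    bDensity m ε (x + 1) ≤ 1 / (ε * Phi m x ^ ε) - 1 / (ε * Phi m (x + 1) ^ ε) := by
  obtain ⟨c, hc, hc_eq⟩ := exists_sub_eq_of_hasDerivAt (f := fun y => 1 / (ε * Phi m y ^ ε))
    fun t ht => hasDerivAt_one_div_mul_Phi_rpow hε.ne' (hx.trans ht.1)
  rw [← neg_sub, hc_eq, neg_neg]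
  exact bDensity_le_bDensity (by linarith) (hx.trans hc.1) hc.2

lemma hasDerivAt_bfun (hε : 0 < ε) (hx : 1 ≤ x) :
    HasDerivAt (bfun m ε) ((bDensity m ε x - bDensity m ε (x + 1)) /
      (1 / (ε * Phi m x ^ ε) - 1 / (ε * Phi m (x + 1) ^ ε))) x := by
  have hF := hasDerivAt_one_div_mul_Phi_rpow (m := m) hε.ne' hx
  have hF₁ := (hasDerivAt_one_div_mul_Phi_rpow (m := m) hε.ne'
    (by linarith : 1 ≤ x + 1)).comp_add_const x 1
  have hG := (bDensity_pos (m := m) (ε := ε) (by linarith : 1 ≤ x + 1)).trans_le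
    (bDensity_le_sub hε hx)
  exact (((hF.fun_sub hF₁).log hG.ne').fun_neg).congr_deriv (by ring)

end bfun

theorem statement14_general (ε : ℝ) (hε0 : 0 < ε) (m : ℕ) :
    ∃ C > (0 : ℝ), ∃ x₀ : ℝ, 1 ≤ x₀ ∧ ∀ x ≥ x₀,
      DifferentiableAt ℝ (bfun m ε) x ∧ |deriv (bfun m ε) x| ≤ C / x := by
  refine ⟨(ε + 1 + m) * exp (ε + 1 + m), by positivity, 1, le_rfl, fun x hx => ?_⟩
  have hb := hasDerivAt_bfun (m := m) hε0 hx
  refine ⟨hb.differentiableAt, ?_⟩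
  have hpos := bDensity_pos (m := m) (ε := ε) (by linarith : 1 ≤ x + 1)
  have hG := bDensity_le_sub (m := m) hε0 hx
  have hnum : 0 ≤ bDensity m ε x - bDensity m ε (x + 1) :=
    sub_nonneg.2 (bDensity_le_bDensity (by linarith) hx (by linarith))
  rw [hb.deriv, abs_of_nonneg (div_nonneg hnum (hpos.le.trans hG))]
  calc _ ≤ (bDensity m ε x - bDensity m ε (x + 1)) / bDensity m ε (x + 1) :=
        div_le_div_of_nonneg_left hnum hpos hG
    _ ≤ _ := bDensity_sub_div_le (by linarith) hx

/-- The derivative of `b_{m,ε}` is `O(1/x)` as `x → ∞`: there are `C > 0`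
and `x₀ ≥ 1` such that for all `x ≥ x₀`, `b_{m,ε}` is differentiable at `x` and
`|b_{m,ε}'(x)| ≤ C / x`. -/
theorem statement14 (ε : ℝ) (hε0 : 0 < ε) (hε1 : ε ≤ 1) (m : ℕ) (hm : 1 ≤ m) :
    ∃ C > (0 : ℝ), ∃ x₀ : ℝ, 1 ≤ x₀ ∧ ∀ x ≥ x₀,
      DifferentiableAt ℝ (bfun m ε) x ∧ |deriv (bfun m ε) x| ≤ C / x :=
  statement14_general ε hε0 m
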